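/- arXiv:math/0111211 — 4 statements merged into one kernel-verified Lean document; each statement's English description precedes it below -/
import Mathlib

section
/- Let ℓ : ℕ → ℝ with ℓ(n) > 0 for all n, and suppose ∑_n ∑_{k≥0} e^{−(1+k)ℓ(n)} < ∞. Then the product Z(1) = ∏_n ∏_{k≥0} (1 − e^{−(1+k)ℓ(n)}) converges to a value in (0,1]; in particular −log Z(1) ≥ 0. Moreover, for every R > 0, if −log Z(1) ≤ R then ℓ(n) ≥ −(1/2)·log(1 − e^{−R}) for every n. -/
/-!
All factors `1 - e^{-(1+k)ℓ(n)}` lie in `(0, 1)`, so `log Z(1)` is the convergent series of the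
nonpositive numbers `log (1 - e^{-(1+k)ℓ(n)})`. Hence `Z(1) ∈ (0, 1]`, and `-log Z(1)` dominates
each single term `-log (1 - e^{-ℓ(n)})`. Finally `φ(x) = -log (1 - e^{-x})` is a decreasing
involution of `(0, ∞)`, so `φ(ℓ(n)) ≤ R` gives `ℓ(n) ≥ φ(R) ≥ φ(R) / 2`.
-/

open Real

namespace Real

variable {ι : Type*} {f : ι → ℝ}

lemma summable_log_one_sub_of_summable (hs : Summable f) :
    Summable fun i ↦ log (1 - f i) := by
  simpa only [sub_eq_add_neg] using summable_log_one_add_of_summable hs.neg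

lemma log_tprod_one_sub (hf : ∀ i, f i < 1) (hs : Summable f) :
    log (∏' i, (1 - f i)) = ∑' i, log (1 - f i) := by
  rw [← rexp_tsum_eq_tprod (fun i ↦ sub_pos.mpr (hf i)) (summable_log_one_sub_of_summable hs),
    log_exp]

lemma log_one_sub_nonpos {x : ℝ} (hx₀ : 0 ≤ x) (hx₁ : x < 1) : log (1 - x) ≤ 0 :=
  log_nonpos (by linarith) (by linarith)

lemma tprod_one_sub_mem_Ioc (hf₀ : ∀ i, 0 ≤ f i) (hf₁ : ∀ i, f i < 1) (hs : Summable f) :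
    ∏' i, (1 - f i) ∈ Set.Ioc 0 1 := by
  rw [← rexp_tsum_eq_tprod (fun i ↦ sub_pos.mpr (hf₁ i)) (summable_log_one_sub_of_summable hs)]
  exact ⟨exp_pos _, exp_le_one_iff.mpr (tsum_nonpos fun i ↦ log_one_sub_nonpos (hf₀ i) (hf₁ i))⟩

lemma neg_log_one_sub_le_neg_log_tprod (hf₀ : ∀ i, 0 ≤ f i) (hf₁ : ∀ i, f i < 1)
    (hs : Summable f) (i : ι) :
    -log (1 - f i) ≤ -log (∏' j, (1 - f j)) := by
  rw [log_tprod_one_sub hf₁ hs, ← tsum_neg]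
  exact (summable_log_one_sub_of_summable hs).neg.le_tsum i fun j _ ↦
    neg_nonneg.mpr (log_one_sub_nonpos (hf₀ j) (hf₁ j))

lemma neg_log_one_sub_exp_neg_le_of_le {L R : ℝ} (hL : 0 < L)
    (h : -log (1 - exp (-L)) ≤ R) : -log (1 - exp (-R)) ≤ L := by
  have hL₁ : 0 < 1 - exp (-L) := sub_pos.mpr (exp_lt_one_iff.mpr (by linarith))
  have hR : exp (-R) ≤ 1 - exp (-L) := by
    rw [← exp_log hL₁]
    exact exp_le_exp.mpr (by linarith)
  have hexp : exp (-L) ≤ 1 - exp (-R) := by linarith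
  have := log_le_log (exp_pos _) hexp
  rw [log_exp] at this
  linarith

end Real

/-- If `ℓ(n) > 0` for all `n` and `∑∑ e^{−(1+k)ℓ(n)} < ∞`, then the product
`Z(1) = ∏∏ (1 − e^{−(1+k)ℓ(n)})` converges to a value in `(0,1]` (so `−log Z(1) ≥ 0`),
and for every `R > 0`, `−log Z(1) ≤ R` implies `ℓ(n) ≥ −½ log(1 − e^{−R})` for all `n`. -/
theorem stmt3 (ℓ : ℕ → ℝ) (hpos : ∀ n, 0 < ℓ n)
    (hsum : Summable fun p : ℕ × ℕ => Real.exp (-(1 + (p.2 : ℝ)) * ℓ p.1)) :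
    Multipliable (fun p : ℕ × ℕ => 1 - Real.exp (-(1 + (p.2 : ℝ)) * ℓ p.1)) ∧
    (∏' p : ℕ × ℕ, (1 - Real.exp (-(1 + (p.2 : ℝ)) * ℓ p.1))) ∈ Set.Ioc (0 : ℝ) 1 ∧
    (0 ≤ -Real.log (∏' p : ℕ × ℕ, (1 - Real.exp (-(1 + (p.2 : ℝ)) * ℓ p.1)))) ∧
    ∀ R : ℝ, 0 < R →
      -Real.log (∏' p : ℕ × ℕ, (1 - Real.exp (-(1 + (p.2 : ℝ)) * ℓ p.1))) ≤ R →
      ∀ n, -(1 / 2) * Real.log (1 - Real.exp (-R)) ≤ ℓ n := by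
  have hf₀ (p : ℕ × ℕ) : 0 ≤ exp (-(1 + (p.2 : ℝ)) * ℓ p.1) := (exp_pos _).le
  have hf₁ (p : ℕ × ℕ) : exp (-(1 + (p.2 : ℝ)) * ℓ p.1) < 1 :=
    exp_lt_one_iff.mpr (by nlinarith [hpos p.1])
  have hZ := tprod_one_sub_mem_Ioc hf₀ hf₁ hsum
  refine ⟨multipliable_of_summable_log (fun p ↦ sub_pos.mpr (hf₁ p))
      (summable_log_one_sub_of_summable hsum), hZ, neg_nonneg.mpr (log_nonpos hZ.1.le hZ.2),
    fun R hR hZR n ↦ ?_⟩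
  have hterm := neg_log_one_sub_le_neg_log_tprod hf₀ hf₁ hsum (n, 0)
  rw [show exp (-(1 + ((0 : ℕ) : ℝ)) * ℓ n) = exp (-ℓ n) by simp] at hterm
  have hℓ := neg_log_one_sub_exp_neg_le_of_le (hpos n) (hterm.trans hZR)
  have := log_one_sub_nonpos (exp_pos (-R)).le (exp_lt_one_iff.mpr (neg_lt_zero.mpr hR))
  linarith
end

section
/- Let ζ : ℕ → ℂ with ζ(n) ≠ 0 for all n and #{n : |ζ(n)| ≤ r} ≤ C(1+r²) for all r ≥ 0, and let P(s) = ∏_n (1 − s/ζ(n))·exp(s/ζ(n) + s²/(2ζ(n)²)) be the associated genus-two canonical product. Then there exists C′ > 0 such that |P(s)| ≤ exp(C′·(1 + |s|²·log(2+|s|))) for all s ∈ ℂ. -/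
/-!
Write `E(z) = (1 - z) exp(z + z²/2)`, so `P(s) = ∏ E(s/ζₙ)`. From the Taylor expansion of
`log (1 - z)`, `log |E(z)| ≤ |z|³` for `|z| ≤ 1/2`, and `log |E(z)| ≤ 5|z|²` everywhere.
With `r = |s|` and `T = 2 + 2r` this gives
`log |P(s)| ≤ 5r² ∑_{|ζₙ| ≤ T} |ζₙ|⁻² + r³ ∑_{|ζₙ| > T} |ζₙ|⁻³`.
Splitting the zeros into dyadic shells `2^k ≤ |ζₙ| < 2^(k+1)`, each of which holds at most
`5C·4^k` of them, the first sum is `O(1 + log T)` (a bounded contribution from the finitely many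
`|ζₙ| < 1`, and `O(1)` per shell) and the second is `O(1/T)` (a geometric series), so
`log |P(s)| = O(1 + r² log(2 + r))`.
-/

open Finset

noncomputable def genusTwoFactor (z : ℂ) : ℂ := (1 - z) * Complex.exp (z + z ^ 2 / 2)

lemma norm_log_one_sub_add_le {z : ℂ} (hz : ‖z‖ ≤ 1 / 2) :
    ‖Complex.log (1 - z) + (z + z ^ 2 / 2)‖ ≤ ‖z‖ ^ 3 := by
  have htaylor := Complex.norm_log_sub_logTaylor_le 2 (z := -z) (by rw [norm_neg]; linarith)
  have hlog : Complex.log (1 + -z) - Complex.logTaylor (2 + 1) (-z)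
      = Complex.log (1 - z) + (z + z ^ 2 / 2) := by
    rw [← sub_eq_add_neg]
    simp only [Complex.logTaylor, sum_range_succ, range_zero, sum_empty]
    push_cast
    ring
  rw [hlog, norm_neg] at htaylor
  have hinv : (1 - ‖z‖)⁻¹ ≤ 2 := by
    rw [inv_le_comm₀ (by linarith) two_pos]
    linarith
  calc _ ≤ ‖z‖ ^ (2 + 1) * (1 - ‖z‖)⁻¹ / (2 + 1) := htaylor
    _ ≤ ‖z‖ ^ 3 := by nlinarith [pow_nonneg (norm_nonneg z) 3]

lemma norm_genusTwoFactor_le_of_norm_le_half {z : ℂ} (hz : ‖z‖ ≤ 1 / 2) :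
    ‖genusTwoFactor z‖ ≤ Real.exp (‖z‖ ^ 3) := by
  have hne : 1 - z ≠ 0 := by
    intro h
    rw [sub_eq_zero] at h
    norm_num [← h] at hz
  rw [genusTwoFactor, ← Complex.exp_log hne, ← Complex.exp_add, Complex.norm_exp]
  exact Real.exp_le_exp.2 ((Complex.re_le_norm _).trans (norm_log_one_sub_add_le hz))

lemma norm_genusTwoFactor_le (z : ℂ) : ‖genusTwoFactor z‖ ≤ Real.exp (5 * ‖z‖ ^ 2) := by
  rcases le_or_gt ‖z‖ (1 / 2) with hz | hz
  · exact (norm_genusTwoFactor_le_of_norm_le_half hz).trans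
      (Real.exp_le_exp.2 (by nlinarith [norm_nonneg z]))
  have hlin : ‖1 - z‖ ≤ Real.exp ‖z‖ := by
    calc ‖1 - z‖ ≤ ‖(1 : ℂ)‖ + ‖z‖ := norm_sub_le _ _
      _ ≤ Real.exp ‖z‖ := by linarith [norm_one (α := ℂ), Real.add_one_le_exp ‖z‖]
  have hre : (z + z ^ 2 / 2).re ≤ ‖z‖ + ‖z‖ ^ 2 / 2 := by
    calc (z + z ^ 2 / 2).re ≤ ‖z + z ^ 2 / 2‖ := Complex.re_le_norm _
      _ ≤ ‖z‖ + ‖z ^ 2 / 2‖ := norm_add_le _ _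
      _ = ‖z‖ + ‖z‖ ^ 2 / 2 := by simp [norm_pow]
  calc ‖genusTwoFactor z‖ = ‖1 - z‖ * Real.exp (z + z ^ 2 / 2).re := by
        rw [genusTwoFactor, norm_mul, Complex.norm_exp]
    _ ≤ Real.exp ‖z‖ * Real.exp (‖z‖ + ‖z‖ ^ 2 / 2) := by gcongr
    _ = Real.exp (2 * ‖z‖ + ‖z‖ ^ 2 / 2) := by rw [← Real.exp_add]; ring_nf
    _ ≤ Real.exp (5 * ‖z‖ ^ 2) := Real.exp_le_exp.2 (by nlinarith)

/-- Beyond `x = 2 + 2r` the point `s / w` (with `‖s‖ = r`, `‖w‖ = x`) lies in the disc of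
radius `1/2`, where the cubic bound on the genus-two factor applies. -/
noncomputable def genusTwoWeight (r x : ℝ) : ℝ :=
  if x ≤ 2 + 2 * r then 5 * r ^ 2 * (x ^ 2)⁻¹ else r ^ 3 * (x ^ 3)⁻¹

lemma norm_genusTwoFactor_div_le (s w : ℂ) :
    ‖genusTwoFactor (s / w)‖ ≤ Real.exp (genusTwoWeight ‖s‖ ‖w‖) := by
  unfold genusTwoWeight
  split_ifs with hw
  · simpa [norm_div, div_eq_mul_inv, mul_pow, inv_pow, mul_assoc] using
      norm_genusTwoFactor_le (s / w)
  · have hhalf : ‖s / w‖ ≤ 1 / 2 := by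
      rw [norm_div, div_le_iff₀ (by linarith [norm_nonneg s])]
      linarith
    simpa [norm_div, div_eq_mul_inv, mul_pow, inv_pow] using
      norm_genusTwoFactor_le_of_norm_le_half hhalf

lemma norm_tprod_le_exp_of_sum_le {ι E : Type*} [NormedCommRing E] [NormOneClass E]
    {f : ι → E} {g : ι → ℝ} {B : ℝ} (hfg : ∀ i, ‖f i‖ ≤ Real.exp (g i))
    (hB : ∀ u : Finset ι, ∑ i ∈ u, g i ≤ B) :
    ‖∏' i, f i‖ ≤ Real.exp B := by
  have hpartial (u : Finset ι) : ‖∏ i ∈ u, f i‖ ≤ Real.exp B :=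
    calc ‖∏ i ∈ u, f i‖ ≤ ∏ i ∈ u, ‖f i‖ := u.norm_prod_le f
      _ ≤ ∏ i ∈ u, Real.exp (g i) :=
          prod_le_prod (fun _ _ ↦ norm_nonneg _) fun i _ ↦ hfg i
      _ = Real.exp (∑ i ∈ u, g i) := (Real.exp_sum u g).symm
      _ ≤ Real.exp B := Real.exp_le_exp.2 (hB u)
  by_cases hf : Multipliable f
  · exact le_of_tendsto' (Filter.Tendsto.norm hf.hasProd) hpartial
  · -- the junk value of a divergent product is `1`, and `1 ≤ exp B` by `hB ∅`
    simpa [tprod_eq_one_of_not_multipliable hf] using hpartial ∅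

/-- `⌊log₂ x⌋` for `x ≥ 1`. -/
noncomputable def dyadicIndex (x : ℝ) : ℕ := Nat.log 2 ⌊x⌋₊

lemma four_pow_eq_sq_two_pow (j : ℕ) : (4 : ℝ) ^ j = ((2 : ℝ) ^ j) ^ 2 := by
  rw [← pow_mul, mul_comm, pow_mul]
  norm_num

lemma two_pow_dyadicIndex_le {x : ℝ} (hx : 1 ≤ x) : (2 : ℝ) ^ dyadicIndex x ≤ x := by
  have hfloor : ⌊x⌋₊ ≠ 0 := (Nat.floor_pos.2 hx).ne'
  calc (2 : ℝ) ^ dyadicIndex x = ((2 ^ dyadicIndex x : ℕ) : ℝ) := by push_cast; rfl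
    _ ≤ ⌊x⌋₊ := by exact_mod_cast Nat.pow_log_le_self 2 hfloor
    _ ≤ x := Nat.floor_le (by linarith)

lemma lt_two_pow_dyadicIndex_succ (x : ℝ) : x < 2 ^ (dyadicIndex x + 1) := by
  calc x < ⌊x⌋₊ + 1 := Nat.lt_floor_add_one x
    _ ≤ ((2 ^ (dyadicIndex x + 1) : ℕ) : ℝ) := by
        exact_mod_cast Nat.lt_pow_succ_log_self one_lt_two _
    _ = 2 ^ (dyadicIndex x + 1) := by push_cast; rfl

lemma dyadicIndex_mono : Monotone dyadicIndex :=
  fun _ _ h ↦ Nat.log_mono_right (Nat.floor_le_floor h)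

section Counting

variable {ι : Type*} {a : ι → ℝ} {u : Finset ι} {C : ℝ}

noncomputable def QuadraticCountBound (a : ι → ℝ) (u : Finset ι) (C : ℝ) : Prop :=
  ∀ r : ℝ, 0 ≤ r → (#{n ∈ u | a n ≤ r} : ℝ) ≤ C * (1 + r ^ 2)

lemma quadraticCountBound_of_ncard
    (h : ∀ r : ℝ, 0 ≤ r →
      {n | a n ≤ r}.Finite ∧ ({n | a n ≤ r}.ncard : ℝ) ≤ C * (1 + r ^ 2))
    (u : Finset ι) : QuadraticCountBound a u C := by
  intro r hr
  obtain ⟨hfin, hcard⟩ := h r hr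
  refine le_trans ?_ hcard
  rw [← Set.ncard_coe_finset]
  exact_mod_cast Set.ncard_le_ncard (fun n hn ↦ (mem_filter.1 hn).2) hfin

namespace QuadraticCountBound

lemma const_nonneg (h : QuadraticCountBound a u C) : 0 ≤ C := by
  simpa using (Nat.cast_nonneg _).trans (h 0 le_rfl)

lemma div (h : QuadraticCountBound a u C) {t : ℝ} (ht : 1 ≤ t) :
    QuadraticCountBound (fun n ↦ a n / t) u (C * t ^ 2) := by
  intro r hr
  have hfilter : {n ∈ u | a n / t ≤ r} = {n ∈ u | a n ≤ r * t} :=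
    filter_congr fun n _ ↦ div_le_iff₀ (by linarith)
  have hC := h.const_nonneg
  have ht2 : 1 ≤ t ^ 2 := one_le_pow₀ ht
  rw [hfilter]
  calc _ ≤ C * (1 + (r * t) ^ 2) := h _ (by positivity)
    _ ≤ C * t ^ 2 * (1 + r ^ 2) := by nlinarith

lemma card_dyadicShell_le (h : QuadraticCountBound a u C) (j : ℕ) :
    (#{n ∈ u | 1 ≤ a n ∧ dyadicIndex (a n) = j} : ℝ) ≤ 5 * C * 4 ^ j := by
  have hsub : {n ∈ u | 1 ≤ a n ∧ dyadicIndex (a n) = j} ⊆ {n ∈ u | a n ≤ 2 ^ (j + 1)} :=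
    monotone_filter_right u fun n _ hn ↦ hn.2 ▸ (lt_two_pow_dyadicIndex_succ _).le
  have hC := h.const_nonneg
  have h4 : (1 : ℝ) ≤ 4 ^ j := one_le_pow₀ (by norm_num)
  calc _ ≤ (#{n ∈ u | a n ≤ 2 ^ (j + 1)} : ℝ) := by exact_mod_cast card_le_card hsub
    _ ≤ C * (1 + ((2 : ℝ) ^ (j + 1)) ^ 2) := h _ (by positivity)
    _ = C * (1 + 4 * 4 ^ j) := by rw [four_pow_eq_sq_two_pow]; ring
    _ ≤ 5 * C * 4 ^ j := by nlinarith

lemma sum_dyadicShell_inv_pow_le (h : QuadraticCountBound a u C) (p j : ℕ) :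
    ∑ n ∈ u with 1 ≤ a n ∧ dyadicIndex (a n) = j, (a n ^ p)⁻¹
      ≤ 5 * C * 4 ^ j / ((2 : ℝ) ^ j) ^ p := by
  have hterm : ∀ n ∈ {n ∈ u | 1 ≤ a n ∧ dyadicIndex (a n) = j},
      (a n ^ p)⁻¹ ≤ (((2 : ℝ) ^ j) ^ p)⁻¹ := by
    intro n hn
    obtain ⟨-, h1, rfl⟩ := mem_filter.1 hn
    exact inv_anti₀ (by positivity)
      (pow_le_pow_left₀ (by positivity) (two_pow_dyadicIndex_le h1) p)
  calc _ ≤ #{n ∈ u | 1 ≤ a n ∧ dyadicIndex (a n) = j} • (((2 : ℝ) ^ j) ^ p)⁻¹ :=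
        sum_le_card_nsmul _ _ _ hterm
    _ ≤ 5 * C * 4 ^ j * (((2 : ℝ) ^ j) ^ p)⁻¹ := by
        rw [nsmul_eq_mul]
        gcongr
        exact h.card_dyadicShell_le j
    _ = _ := (div_eq_mul_inv _ _).symm

lemma sum_inv_sq_le (h : QuadraticCountBound a u C) {T : ℝ} (hT : 1 ≤ T) :
    ∑ n ∈ u with 1 ≤ a n ∧ a n ≤ T, (a n ^ 2)⁻¹ ≤ 5 * C * (Real.logb 2 T + 1) := by
  set v := {n ∈ u | 1 ≤ a n ∧ a n ≤ T}
  have hmaps : ∀ n ∈ v, dyadicIndex (a n) ∈ range (dyadicIndex T + 1) := fun n hn ↦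
    mem_range_succ_iff.2 (dyadicIndex_mono (mem_filter.1 hn).2.2)
  have hfiber (j : ℕ) : ∑ n ∈ v with dyadicIndex (a n) = j, (a n ^ 2)⁻¹ ≤ 5 * C :=
    calc _ ≤ ∑ n ∈ u with 1 ≤ a n ∧ dyadicIndex (a n) = j, (a n ^ 2)⁻¹ := by
          refine sum_le_sum_of_subset_of_nonneg (fun n hn ↦ ?_) fun _ _ _ ↦ by positivity
          simp only [v, mem_filter] at hn ⊢
          exact ⟨hn.1.1, hn.1.2.1, hn.2⟩
      _ ≤ 5 * C * 4 ^ j / ((2 : ℝ) ^ j) ^ 2 := h.sum_dyadicShell_inv_pow_le 2 j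
      _ = 5 * C := by rw [four_pow_eq_sq_two_pow]; field_simp
  have hindex : (dyadicIndex T : ℝ) ≤ Real.logb 2 T :=
    (Real.le_logb_iff_rpow_le one_lt_two (by linarith)).2
      (by exact_mod_cast two_pow_dyadicIndex_le hT)
  have hC := h.const_nonneg
  calc _ = ∑ j ∈ range (dyadicIndex T + 1),
        ∑ n ∈ v with dyadicIndex (a n) = j, (a n ^ 2)⁻¹ :=
          (sum_fiberwise_of_maps_to hmaps _).symm
    _ ≤ ∑ j ∈ range (dyadicIndex T + 1), 5 * C := sum_le_sum fun j _ ↦ hfiber j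
    _ = 5 * C * (dyadicIndex T + 1) := by simp; ring
    _ ≤ 5 * C * (Real.logb 2 T + 1) := by gcongr

lemma sum_inv_cube_le (h : QuadraticCountBound a u C) :
    ∑ n ∈ u with 1 < a n, (a n ^ 3)⁻¹ ≤ 10 * C := by
  set v := {n ∈ u | 1 < a n}
  set I := v.image fun n ↦ dyadicIndex (a n)
  have hfiber (j : ℕ) :
      ∑ n ∈ v with dyadicIndex (a n) = j, (a n ^ 3)⁻¹ ≤ 5 * C * (1 / 2) ^ j :=
    calc _ ≤ ∑ n ∈ u with 1 ≤ a n ∧ dyadicIndex (a n) = j, (a n ^ 3)⁻¹ := by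
          refine sum_le_sum_of_subset_of_nonneg (fun n hn ↦ ?_) fun n hn _ ↦ ?_
          · simp only [v, mem_filter] at hn ⊢
            exact ⟨hn.1.1, hn.1.2.le, hn.2⟩
          · have : 1 ≤ a n := (mem_filter.1 hn).2.1
            positivity
      _ ≤ 5 * C * 4 ^ j / ((2 : ℝ) ^ j) ^ 3 := h.sum_dyadicShell_inv_pow_le 3 j
      _ = 5 * C * (1 / 2) ^ j := by
          rw [four_pow_eq_sq_two_pow, one_div_pow]
          field_simp
  have hgeom : ∑ j ∈ I, ((1 : ℝ) / 2) ^ j ≤ 2 :=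
    (summable_geometric_two.sum_le_tsum I fun _ _ ↦ by positivity).trans_eq tsum_geometric_two
  have hC := h.const_nonneg
  calc _ = ∑ j ∈ I, ∑ n ∈ v with dyadicIndex (a n) = j, (a n ^ 3)⁻¹ :=
        (sum_fiberwise_of_maps_to (fun n hn ↦ mem_image_of_mem _ hn) _).symm
    _ ≤ ∑ j ∈ I, 5 * C * (1 / 2) ^ j := sum_le_sum fun j _ ↦ hfiber j
    _ = 5 * C * ∑ j ∈ I, ((1 : ℝ) / 2) ^ j := (mul_sum _ _ _).symm
    _ ≤ 5 * C * 2 := by gcongr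
    _ = 10 * C := by ring

lemma sum_inv_cube_le_of_lt (h : QuadraticCountBound a u C) {T : ℝ} (hT : 1 ≤ T) :
    ∑ n ∈ u with T < a n, (a n ^ 3)⁻¹ ≤ 10 * C / T := by
  have hT0 : 0 < T := by linarith
  have hscaled := (h.div hT).sum_inv_cube_le
  have hfilter : {n ∈ u | 1 < a n / T} = {n ∈ u | T < a n} :=
    filter_congr fun n _ ↦ one_lt_div hT0
  simp only [hfilter] at hscaled
  calc _ = (T ^ 3)⁻¹ * ∑ n ∈ u with T < a n, ((a n / T) ^ 3)⁻¹ := by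
        rw [mul_sum]
        refine sum_congr rfl fun n _ ↦ ?_
        rw [div_pow, inv_div, ← div_eq_inv_mul, div_div_cancel_left' (by positivity)]
    _ ≤ (T ^ 3)⁻¹ * (10 * (C * T ^ 2)) := by gcongr
    _ = 10 * C / T := by field_simp

lemma sum_genusTwoWeight_le (h : QuadraticCountBound a u C) {r K : ℝ} (hr : 0 ≤ r)
    (hK : ∑ n ∈ u with a n < 1, (a n ^ 2)⁻¹ ≤ K) :
    ∑ n ∈ u, genusTwoWeight r (a n) ≤ (10 * K + 85 * C) * (r ^ 2 * Real.log (2 + r)) := by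
  set T := 2 + 2 * r
  set L := Real.log (2 + r)
  have hC := h.const_nonneg
  have hK0 : 0 ≤ K := (sum_nonneg fun _ _ ↦ by positivity).trans hK
  have hsq : ∑ n ∈ u with a n ≤ T, (a n ^ 2)⁻¹ ≤ K + 5 * C * (Real.logb 2 T + 1) := by
    rw [← sum_filter_add_sum_filter_not _ (fun n ↦ a n < 1), filter_filter, filter_filter]
    gcongr ?_ + ?_
    · refine le_trans ?_ hK
      exact sum_le_sum_of_subset_of_nonneg (monotone_filter_right _ fun n _ hn ↦ hn.2)
        fun _ _ _ ↦ by positivity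
    · refine le_of_eq_of_le ?_ (h.sum_inv_sq_le (by linarith))
      exact sum_congr (filter_congr fun n _ ↦ by rw [not_lt, and_comm]) fun _ _ ↦ rfl
  have hL : 1 / 2 ≤ L := by
    have := Real.log_le_log two_pos (by linarith : (2 : ℝ) ≤ 2 + r)
    linarith [Real.log_two_gt_d9]
  have hlogb : Real.logb 2 T + 1 ≤ 3 * L := by
    have hlog : Real.log (2 * T) ≤ 2 * L :=
      calc Real.log (2 * T) ≤ Real.log ((2 + r) ^ 2) :=
            Real.log_le_log (by positivity) (by nlinarith)
        _ = 2 * L := by rw [Real.log_pow]; push_cast; rfl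
    have hsum : Real.logb 2 T + 1 = Real.log (2 * T) / Real.log 2 := by
      rw [Real.logb, Real.log_mul two_ne_zero (by positivity)]
      field_simp
      ring
    rw [hsum, div_le_iff₀ (Real.log_pos one_lt_two)]
    nlinarith [Real.log_two_gt_d9]
  have hcube : r ^ 3 * (10 * C / T) ≤ 5 * C * r ^ 2 := by
    rw [← mul_div_assoc, div_le_iff₀ (by positivity)]
    nlinarith [mul_nonneg hC (pow_nonneg hr 2)]
  calc ∑ n ∈ u, genusTwoWeight r (a n)
      = 5 * r ^ 2 * ∑ n ∈ u with a n ≤ T, (a n ^ 2)⁻¹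
        + r ^ 3 * ∑ n ∈ u with T < a n, (a n ^ 3)⁻¹ := by
        simp only [genusTwoWeight, sum_ite, mul_sum, not_le]
        rfl
    _ ≤ 5 * r ^ 2 * (K + 5 * C * (3 * L)) + 5 * C * r ^ 2 := by
        refine add_le_add (by gcongr; exact hsq.trans (by gcongr)) (le_trans ?_ hcube)
        gcongr
        exact h.sum_inv_cube_le_of_lt (by linarith)
    _ ≤ (10 * K + 85 * C) * (r ^ 2 * L) := by
        nlinarith [mul_nonneg (mul_nonneg hK0 (sq_nonneg r)) (by linarith : 0 ≤ L - 1 / 2),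
          mul_nonneg (mul_nonneg hC (sq_nonneg r)) (by linarith : 0 ≤ L - 1 / 2)]

end QuadraticCountBound

end Counting

theorem stmt5_general (ζ : ℕ → ℂ) (C : ℝ)
    (hcount : ∀ r : ℝ, 0 ≤ r → {n : ℕ | ‖ζ n‖ ≤ r}.Finite ∧
      ({n : ℕ | ‖ζ n‖ ≤ r}.ncard : ℝ) ≤ C * (1 + r ^ 2))
    (P : ℂ → ℂ)
    (hP : ∀ s : ℂ, P s = ∏' n : ℕ,
      (1 - s / ζ n) * Complex.exp (s / ζ n + s ^ 2 / (2 * ζ n ^ 2))) :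
    ∃ C' : ℝ, 0 < C' ∧ ∀ s : ℂ,
      ‖P s‖ ≤ Real.exp (C' * (1 + ‖s‖ ^ 2 * Real.log (2 + ‖s‖))) := by
  have hbound := quadraticCountBound_of_ncard hcount
  obtain ⟨hfin, -⟩ := hcount 1 zero_le_one
  set K := ∑ n ∈ hfin.toFinset, (‖ζ n‖ ^ 2)⁻¹
  have hsmall (u : Finset ℕ) : ∑ n ∈ u with ‖ζ n‖ < 1, (‖ζ n‖ ^ 2)⁻¹ ≤ K :=
    sum_le_sum_of_subset_of_nonneg (fun n hn ↦ hfin.mem_toFinset.2 (mem_filter.1 hn).2.le)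
      fun _ _ _ ↦ by positivity
  have hK : 0 ≤ K := sum_nonneg fun _ _ ↦ by positivity
  have hC := (hbound ∅).const_nonneg
  refine ⟨10 * K + 85 * C + 1, by linarith, fun s ↦ ?_⟩
  have hfactor (n : ℕ) : (1 - s / ζ n) * Complex.exp (s / ζ n + s ^ 2 / (2 * ζ n ^ 2))
      = genusTwoFactor (s / ζ n) := by
    rw [genusTwoFactor, div_pow, div_div, mul_comm (ζ n ^ 2)]
  rw [hP, tprod_congr hfactor]
  refine (norm_tprod_le_exp_of_sum_le (fun n ↦ norm_genusTwoFactor_div_le s (ζ n))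
    fun u ↦ (hbound u).sum_genusTwoWeight_le (norm_nonneg s) (hsmall u)).trans ?_
  have hlog : 0 ≤ ‖s‖ ^ 2 * Real.log (2 + ‖s‖) :=
    mul_nonneg (sq_nonneg _) (Real.log_nonneg (by linarith [norm_nonneg s]))
  exact Real.exp_le_exp.2 (by nlinarith)

/-- Under the counting bound `#{n : |ζ n| ≤ r} ≤ C(1+r²)`, the genus-two
canonical product `P(s) = ∏ (1 − s/ζ n)·exp(s/ζ n + s²/(2 ζ n²))` satisfies
`|P(s)| ≤ exp(C′ (1 + |s|² log(2+|s|)))` for some `C′ > 0` and all `s ∈ ℂ`. -/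
theorem stmt5 (ζ : ℕ → ℂ) (hζ : ∀ n, ζ n ≠ 0) (C : ℝ) (hC : 0 < C)
    (hcount : ∀ r : ℝ, 0 ≤ r → {n : ℕ | ‖ζ n‖ ≤ r}.Finite ∧
      ({n : ℕ | ‖ζ n‖ ≤ r}.ncard : ℝ) ≤ C * (1 + r ^ 2))
    (P : ℂ → ℂ)
    (hP : ∀ s : ℂ, P s = ∏' n : ℕ,
      (1 - s / ζ n) * Complex.exp (s / ζ n + s ^ 2 / (2 * ζ n ^ 2))) :
    ∃ C' : ℝ, 0 < C' ∧ ∀ s : ℂ,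
      ‖P s‖ ≤ Real.exp (C' * (1 + ‖s‖ ^ 2 * Real.log (2 + ‖s‖))) :=
  stmt5_general ζ C hcount P hP
end

section
/- Let ζ : ℕ → ℂ satisfy #{n : |ζ(n)| ≤ r} ≤ C(1+r²) for all r ≥ 0, and let δ > 0. Then there exist c > 0 and a countable collection (D_j) of pairwise disjoint open discs in ℂ such that {ζ(n) : n ∈ ℕ} ⊆ ∪_j D_j, and every s ∈ ℂ with s ∉ ∪_j D_j satisfies |s − ζ(n)| ≥ c·(1+|s|²)^{−(2+δ)/2} for all n. -/
/-
Around each `ζ n` put the disc of radius `w n = ε ⟨ζ n⟩^(-2q)`, `q = (2+δ)/2 > 1`. Ordered by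
modulus, the `k`-th point satisfies `k ≤ C ⟨ζ n⟩²`, so `∑ w n ≤ ε C^q ∑ k^(-q)` is finite and, for
small `ε`, small.

Cut the plane by circles `|s| = t k`, `t k ∈ [2k-1, 2k]`. Each annulus contains finitely many discs;
merging overlapping pairs (Cartan) leaves disjoint discs, each of radius at most the total radius of
the discs it absorbed. A merged disc of radius `ρ` meeting the circle `|s| = τ` puts mass `≥ 2ρ` of
`μ = ∑ 2 w n δ_{|ζ n|}` into `[τ - 2ρ, τ + 2ρ]`; by the Vitali covering lemma the set of such `τ`
has measure `≤ 8 μ(ℝ) < 1`, so every unit interval contains a cut radius that no merged disc meets.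
Hence discs from different annuli are disjoint.

Off the discs `|s - ζ n| ≥ w n`, and this is `≳ ⟨s⟩^(-2q)` since either `|ζ n| ≤ 2|s| + 1` or
`|s - ζ n| ≥ 1`.
-/

open Metric Set Function MeasureTheory
open scoped Finset ENNReal

theorem IsPreconnected.mapsTo_Ioo {X : Type*} [TopologicalSpace X] {s : Set X}
    (hs : IsPreconnected s) {f : X → ℝ} (hf : ContinuousOn f s) {a b : ℝ}
    (ha : ∀ x ∈ s, f x ≠ a) (hb : ∀ x ∈ s, f x ≠ b) {x₀ : X} (hx₀ : x₀ ∈ s)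
    (h₀ : f x₀ ∈ Ioo a b) : MapsTo f s (Ioo a b) := by
  have himg := hs.image f hf
  intro x hx
  by_contra! hout
  rw [mem_Ioo, not_and_or, not_lt, not_lt] at hout
  rcases hout with hxa | hxb
  · obtain ⟨y, hy, hya⟩ := himg.Icc_subset (mem_image_of_mem f hx) (mem_image_of_mem f hx₀)
      ⟨hxa, h₀.1.le⟩
    exact ha y hy hya
  · obtain ⟨y, hy, hyb⟩ := himg.Icc_subset (mem_image_of_mem f hx₀) (mem_image_of_mem f hx)
      ⟨h₀.2.le, hxb⟩
    exact hb y hy hyb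

theorem exists_mem_Ico_of_forall_exists_lt {t : ℕ → ℝ} (htop : ∀ R, ∃ k, R < t k) {x : ℝ}
    (hx : t 0 ≤ x) : ∃ k, x ∈ Ico (t k) (t (k + 1)) := by
  classical
  obtain ⟨k, hk⟩ : ∃ k, Nat.find (htop x) = k + 1 :=
    Nat.exists_eq_add_one.mpr (Nat.pos_of_ne_zero fun h => (Nat.find_spec (htop x)).not_ge
      (h ▸ hx))
  refine ⟨k, not_lt.mp (Nat.find_min (htop x) (by omega)), hk ▸ Nat.find_spec (htop x)⟩

theorem exists_nat_pairwise_disjoint_ball_iUnion_eq {α E : Type*} [Countable α]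
    [PseudoMetricSpace E] [Nonempty E] (c : α → E) (ρ : α → ℝ)
    (h : Pairwise (Disjoint on fun a => ball (c a) (ρ a))) :
    ∃ (z : ℕ → E) (r : ℕ → ℝ), Pairwise (Disjoint on fun j => ball (z j) (r j)) ∧
      ⋃ j, ball (z j) (r j) = ⋃ a, ball (c a) (ρ a) := by
  obtain ⟨e, he⟩ := Countable.exists_injective_nat α
  have hg := he.isPartialInv
  -- index `j` carries the ball of `a` if `j = e a`, and an empty ball otherwise
  set g := partialInv e
  have hball : ∀ j, ball ((g j).elim (Classical.arbitrary E) c) ((g j).elim 0 ρ) =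
      (g j).elim ∅ fun a => ball (c a) (ρ a) := by
    intro j
    cases g j <;> simp
  refine ⟨fun j => (g j).elim (Classical.arbitrary E) c, fun j => (g j).elim 0 ρ, ?_, ?_⟩
  · intro i j hij
    simp only [onFun, hball]
    cases hi : g i with
    | none => simp
    | some a =>
      cases hj : g j with
      | none => simp
      | some b =>
        refine h fun hab => hij ?_
        rw [← (hg a i).mp hi, ← (hg b j).mp hj, hab]
  · apply Subset.antisymm
    · refine iUnion_subset fun j => ?_
      rw [hball]
      cases g j with
      | none => exact empty_subset _
      | some a => exact subset_iUnion (fun a => ball (c a) (ρ a)) a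
    · refine iUnion_subset fun a => ?_
      refine subset_trans ?_ (subset_iUnion _ (e a))
      simp only [hg.eq a, Option.elim_some, subset_rfl]

theorem exists_union_ball_subset_ball_add_of_not_disjoint {E : Type*} [NormedAddCommGroup E]
    [NormedSpace ℝ E] {c₁ c₂ : E} {r₁ r₂ : ℝ}
    (h : ¬Disjoint (ball c₁ r₁) (ball c₂ r₂)) :
    ∃ z, ball c₁ r₁ ∪ ball c₂ r₂ ⊆ ball z (r₁ + r₂) := by
  obtain ⟨p, hp₁, hp₂⟩ := not_disjoint_iff.mp h
  rw [mem_ball] at hp₁ hp₂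
  have hr₁ : 0 < r₁ := dist_nonneg.trans_lt hp₁
  have hr₂ : 0 < r₂ := dist_nonneg.trans_lt hp₂
  have hd : dist c₁ c₂ ≤ r₁ + r₂ := by linarith [dist_triangle_left c₁ c₂ p]
  -- the point dividing `[c₁, c₂]` in the ratio `r₂ : r₁`
  have hθ : r₂ / (r₁ + r₂) * (r₁ + r₂) = r₂ := div_mul_cancel₀ _ (by positivity)
  have hθ₀ : 0 ≤ r₂ / (r₁ + r₂) := by positivity
  have hθ₁ : 0 ≤ 1 - r₂ / (r₁ + r₂) := by nlinarith
  refine ⟨AffineMap.lineMap c₁ c₂ (r₂ / (r₁ + r₂)),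
    union_subset (ball_subset_ball' ?_) (ball_subset_ball' ?_)⟩
  · rw [dist_comm, dist_lineMap_left, Real.norm_of_nonneg hθ₀]
    nlinarith [mul_le_mul_of_nonneg_left hd hθ₀]
  · rw [dist_comm, dist_lineMap_right, Real.norm_of_nonneg hθ₁]
    nlinarith [mul_le_mul_of_nonneg_left hd hθ₁]

structure BallCluster {E ι : Type*} [PseudoMetricSpace E] (x : ι → E) (r : ι → ℝ) where
  center : E
  radius : ℝ
  members : Finset ι
  radius_le : radius ≤ ∑ n ∈ members, r n
  ball_subset : ∀ n ∈ members, ball (x n) (r n) ⊆ ball center radius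

namespace BallCluster

section PseudoMetricSpace

variable {E ι : Type*} [PseudoMetricSpace E] {x : ι → E} {r : ι → ℝ}

protected def ball (K : BallCluster x r) : Set E := Metric.ball K.center K.radius

def single (n : ι) : BallCluster x r :=
  ⟨x n, r n, {n}, by simp, by simp⟩

theorem mem_ball_of_mem (K : BallCluster x r) (hr : ∀ n, 0 < r n) {n : ι}
    (hn : n ∈ K.members) : x n ∈ K.ball :=
  K.ball_subset n hn (mem_ball_self (hr n))

end PseudoMetricSpace

variable {E ι : Type*} [NormedAddCommGroup E] [NormedSpace ℝ E] {x : ι → E} {r : ι → ℝ}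

theorem exists_members_eq_union [DecidableEq ι] (K L : BallCluster x r)
    (hm : Disjoint K.members L.members) (hb : ¬Disjoint K.ball L.ball) :
    ∃ M : BallCluster x r, M.members = K.members ∪ L.members := by
  obtain ⟨z, hz⟩ := exists_union_ball_subset_ball_add_of_not_disjoint hb
  refine ⟨⟨z, K.radius + L.radius, K.members ∪ L.members, ?_, ?_⟩, rfl⟩
  · rw [Finset.sum_union hm]
    exact add_le_add K.radius_le L.radius_le
  · intro n hn
    rcases Finset.mem_union.mp hn with hn | hn
    · exact (K.ball_subset n hn).trans (subset_union_left.trans hz)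
    · exact (L.ball_subset n hn).trans (subset_union_right.trans hz)

theorem exists_pairwiseDisjoint_ball_of_pairwiseDisjoint_members [DecidableEq ι]
    (S : Finset (BallCluster x r)) (hS : (S : Set (BallCluster x r)).PairwiseDisjoint members) :
    ∃ T : Finset (BallCluster x r), (T : Set (BallCluster x r)).PairwiseDisjoint BallCluster.ball ∧
      T.biUnion members = S.biUnion members := by
  classical
  induction hN : S.card using Nat.strong_induction_on generalizing S with
  | _ N ih =>
  by_cases hd : (S : Set (BallCluster x r)).PairwiseDisjoint BallCluster.ball
  · exact ⟨S, hd, rfl⟩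
  obtain ⟨K, hK, L, hL, hKL, hb⟩ : ∃ K ∈ S, ∃ L ∈ S, K ≠ L ∧ ¬Disjoint K.ball L.ball := by
    simpa [Set.PairwiseDisjoint, Set.Pairwise] using hd
  obtain ⟨M, hM⟩ := exists_members_eq_union K L (hS hK hL hKL) hb
  set R := (S.erase K).erase L
  have hLK : L ∈ S.erase K := Finset.mem_erase.mpr ⟨hKL.symm, hL⟩
  have hS_eq : S = insert K (insert L R) := by
    rw [Finset.insert_erase hLK, Finset.insert_erase hK]
  have hR : ∀ J ∈ R, Disjoint J.members M.members := by
    intro J hJ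
    obtain ⟨hJL, hJK, hJS⟩ : J ≠ L ∧ J ≠ K ∧ J ∈ S := by simpa [R] using hJ
    rw [hM]
    exact Finset.disjoint_union_right.mpr ⟨hS hJS hK hJK, hS hJS hL hJL⟩
  have hcard : (insert M R).card < N := by
    have h₁ := Finset.card_insert_le M R
    have h₂ : R.card = (S.erase K).card - 1 := Finset.card_erase_of_mem hLK
    have h₃ := Finset.card_erase_of_mem hK
    have h₄ := Finset.card_pos.mpr ⟨L, hLK⟩
    omega
  have hS' : ((insert M R : Finset _) : Set (BallCluster x r)).PairwiseDisjoint members := by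
    rw [Finset.coe_insert]
    refine (hS.subset ?_).insert fun J hJ _ => (hR J hJ).symm
    exact fun J hJ => Finset.mem_of_mem_erase (Finset.mem_of_mem_erase hJ)
  obtain ⟨T, hT, hTS⟩ := ih _ hcard _ hS' rfl
  refine ⟨T, hT, ?_⟩
  rw [hTS, Finset.biUnion_insert, hM, hS_eq, Finset.biUnion_insert, Finset.biUnion_insert,
    Finset.union_assoc]

theorem exists_pairwiseDisjoint_ball [DecidableEq ι] (s : Finset ι) :
    ∃ T : Finset (BallCluster x r), (T : Set (BallCluster x r)).PairwiseDisjoint BallCluster.ball ∧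
      T.biUnion members = s := by
  classical
  have hS : ((s.image single : Finset (BallCluster x r)) : Set (BallCluster x r)).PairwiseDisjoint
      members := by
    intro K hK L hL hKL
    obtain ⟨m, -, rfl⟩ := Finset.mem_image.mp hK
    obtain ⟨n, -, rfl⟩ := Finset.mem_image.mp hL
    exact Finset.disjoint_singleton.mpr fun h => hKL (h ▸ rfl)
  obtain ⟨T, hT, hTs⟩ := exists_pairwiseDisjoint_ball_of_pairwiseDisjoint_members _ hS
  refine ⟨T, hT, ?_⟩
  rw [hTs, Finset.image_biUnion]
  simp [single]

theorem mapsTo_norm_Ioo (K : BallCluster x r) (hr : ∀ n, 0 < r n) {a b : ℝ}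
    (ha : ∀ p ∈ K.ball, ‖p‖ ≠ a) (hb : ∀ p ∈ K.ball, ‖p‖ ≠ b)
    (hK : ∀ n ∈ K.members, ‖x n‖ ∈ Ioo a b) : MapsTo norm K.ball (Ioo a b) := by
  rcases K.members.eq_empty_or_nonempty with h | ⟨n, hn⟩
  · have : K.ball = ∅ := ball_eq_empty.mpr (by simpa [h] using K.radius_le)
    rw [this]
    exact mapsTo_empty _ _
  · exact (convex_ball _ _).isPreconnected.mapsTo_Ioo continuous_norm.continuousOn ha hb
      (K.mem_ball_of_mem hr hn) (hK n hn)

end BallCluster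

theorem Finset.sum_card_filter_le_le_sum_range {ι α : Type*} [DecidableEq ι] [LinearOrder α]
    (a : ι → α) {φ : ℕ → ℝ} (hφ : AntitoneOn φ (Set.Ici 1)) (F : Finset ι) :
    ∑ n ∈ F, φ #{m ∈ F | a m ≤ a n} ≤ ∑ j ∈ Finset.range #F, φ (j + 1) := by
  induction F using Finset.induction_on_max_value a with
  | empty => simp
  | insert b s hb hmax ih =>
    have hcard_b : #{m ∈ insert b s | a m ≤ a b} = #s + 1 := by
      rw [Finset.filter_true_of_mem, Finset.card_insert_of_notMem hb]
      simpa using hmax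
    have hle : ∀ n ∈ s, φ #{m ∈ insert b s | a m ≤ a n} ≤ φ #{m ∈ s | a m ≤ a n} := by
      intro n hn
      have hpos : 1 ≤ #{m ∈ s | a m ≤ a n} := Finset.card_pos.mpr ⟨n, by simp [hn]⟩
      exact hφ hpos (hpos.trans (Finset.card_le_card (Finset.filter_subset_filter _
        (Finset.subset_insert _ _)))) (Finset.card_le_card (Finset.filter_subset_filter _
        (Finset.subset_insert _ _)))
    rw [Finset.sum_insert hb, hcard_b, Finset.card_insert_of_notMem hb, Finset.sum_range_succ]
    linarith [(Finset.sum_le_sum hle).trans ih]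

theorem summable_one_add_norm_sq_rpow_neg {E : Type*} [NormedAddCommGroup E] {ζ : ℕ → E}
    {C p : ℝ} (hC : 0 < C) (hp : 1 < p)
    (hcount : ∀ r : ℝ, 0 ≤ r → {n : ℕ | ‖ζ n‖ ≤ r}.Finite ∧
      ({n : ℕ | ‖ζ n‖ ≤ r}.ncard : ℝ) ≤ C * (1 + r ^ 2)) :
    Summable fun n => (1 + ‖ζ n‖ ^ 2) ^ (-p) := by
  classical
  have hφ : AntitoneOn (fun j : ℕ => (j : ℝ) ^ (-p)) (Set.Ici 1) := fun i hi j _ hij =>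
    Real.rpow_le_rpow_of_nonpos (by exact_mod_cast hi) (by exact_mod_cast hij) (by linarith)
  have hsum : Summable fun j : ℕ => ((j + 1 : ℕ) : ℝ) ^ (-p) :=
    (summable_nat_add_iff 1).mpr (Real.summable_nat_rpow.mpr (by linarith))
  -- the rank of `n` among the points of `F`, ordered by norm, is at most `C (1 + ‖ζ n‖²)`
  have hrank : ∀ F : Finset ℕ, ∀ n ∈ F,
      (1 + ‖ζ n‖ ^ 2) ^ (-p) ≤ C ^ p * (#{m ∈ F | ‖ζ m‖ ≤ ‖ζ n‖} : ℝ) ^ (-p) := by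
    intro F n hn
    obtain ⟨hfin, hle⟩ := hcount ‖ζ n‖ (norm_nonneg _)
    have hk : (1 : ℝ) ≤ #{m ∈ F | ‖ζ m‖ ≤ ‖ζ n‖} := by
      exact_mod_cast Finset.card_pos.mpr ⟨n, by simp [hn]⟩
    have hkC : (#{m ∈ F | ‖ζ m‖ ≤ ‖ζ n‖} : ℝ) ≤ C * (1 + ‖ζ n‖ ^ 2) := by
      refine le_trans ?_ hle
      rw [Set.ncard_eq_toFinset_card _ hfin]
      exact_mod_cast Finset.card_le_card fun m hm => by simp_all
    calc (1 + ‖ζ n‖ ^ 2) ^ (-p)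
        ≤ ((#{m ∈ F | ‖ζ m‖ ≤ ‖ζ n‖} : ℝ) / C) ^ (-p) :=
          Real.rpow_le_rpow_of_nonpos (by positivity) (by rwa [div_le_iff₀' hC]) (by linarith)
      _ = C ^ p * (#{m ∈ F | ‖ζ m‖ ≤ ‖ζ n‖} : ℝ) ^ (-p) := by
          rw [Real.div_rpow (by positivity) hC.le, Real.rpow_neg hC.le]
          field_simp
  refine summable_of_sum_range_le (c := C ^ p * ∑' j : ℕ, ((j + 1 : ℕ) : ℝ) ^ (-p))
    (fun n => by positivity) fun N => ?_
  calc ∑ n ∈ Finset.range N, (1 + ‖ζ n‖ ^ 2) ^ (-p)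
      ≤ C ^ p * ∑ n ∈ Finset.range N,
          (#{m ∈ Finset.range N | ‖ζ m‖ ≤ ‖ζ n‖} : ℝ) ^ (-p) := by
        rw [Finset.mul_sum]
        exact Finset.sum_le_sum (hrank _)
    _ ≤ C ^ p * ∑ j ∈ Finset.range N, ((j + 1 : ℕ) : ℝ) ^ (-p) := by
        refine mul_le_mul_of_nonneg_left ?_ (by positivity)
        simpa using Finset.sum_card_filter_le_le_sum_range (fun m => ‖ζ m‖) hφ (Finset.range N)
    _ ≤ C ^ p * ∑' j : ℕ, ((j + 1 : ℕ) : ℝ) ^ (-p) := by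
        gcongr
        exact hsum.sum_le_tsum _ fun j _ => by positivity

theorem Real.volume_le_of_forall_exists_le_measure_closedBall (μ : Measure ℝ) {s : Set ℝ}
    (h : ∀ t ∈ s, ∃ r > 0, ENNReal.ofReal r ≤ μ (closedBall t r)) :
    volume s ≤ 8 * μ univ := by
  by_cases hμ : μ univ = ∞
  · simp [hμ]
  choose! r hr hrμ using h
  have hR : ∀ t ∈ s, r t ≤ (μ univ).toReal := fun t ht =>
    (ENNReal.ofReal_le_iff_le_toReal hμ).mp ((hrμ t ht).trans (measure_mono (subset_univ _)))
  obtain ⟨u, hus, hdisj, hcover⟩ :=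
    Vitali.exists_disjoint_subfamily_covering_enlargement_closedBall s id r _ hR 4 (by norm_num)
  simp only [id] at hdisj hcover
  have hu : u.Countable := hdisj.countable_of_nonempty_interior fun t ht => by
    rw [interior_closedBall _ (hr t (hus ht)).ne']
    exact nonempty_ball.mpr (hr t (hus ht))
  calc volume s ≤ volume (⋃ t ∈ u, closedBall t (4 * r t)) := measure_mono fun t ht => by
        obtain ⟨b, hb, hsub⟩ := hcover t ht
        exact mem_biUnion hb (hsub (mem_closedBall_self (hr t ht).le))
    _ ≤ ∑' t : u, volume (closedBall (t : ℝ) (4 * r t)) := measure_biUnion_le _ hu _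
    _ = ∑' t : u, 8 * ENNReal.ofReal (r t) := by
        congr 1 with t
        rw [Real.volume_closedBall, ← mul_assoc, ENNReal.ofReal_mul (by norm_num)]
        norm_num
    _ ≤ ∑' t : u, 8 * μ (closedBall (t : ℝ) (r t)) :=
        ENNReal.tsum_le_tsum fun t => by gcongr; exact hrμ t (hus t.2)
    _ = 8 * μ (⋃ t ∈ u, closedBall t (r t)) := by
        rw [ENNReal.tsum_mul_left, measure_biUnion hu hdisj fun _ _ => measurableSet_closedBall]
    _ ≤ 8 * μ univ := by gcongr; exact subset_univ _

theorem Real.exists_mem_Icc_forall_measure_closedBall_lt (μ : Measure ℝ) (hμ : 8 * μ univ < 1)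
    (a : ℝ) : ∃ t ∈ Icc a (a + 1), ∀ r > 0, μ (closedBall t r) < ENNReal.ofReal r := by
  by_contra! h
  have := Real.volume_le_of_forall_exists_le_measure_closedBall μ h
  rw [Real.volume_Icc, add_sub_cancel_left, ENNReal.ofReal_one] at this
  exact (this.trans_lt hμ).false

theorem ofReal_sum_le_sum_smul_dirac_apply {ι α : Type*} [MeasurableSpace α] {a : ι → α}
    {v : ι → ℝ} (hv : ∀ n, 0 ≤ v n) {s : Set α} (hs : MeasurableSet s) {K : Finset ι}
    (hK : ∀ n ∈ K, a n ∈ s) :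
    ENNReal.ofReal (∑ n ∈ K, v n) ≤
      Measure.sum (fun n => ENNReal.ofReal (v n) • Measure.dirac (a n)) s := by
  rw [ENNReal.ofReal_sum_of_nonneg fun n _ => hv n, Measure.sum_apply _ hs]
  refine le_trans (le_of_eq (Finset.sum_congr rfl fun n hn => ?_)) (ENNReal.sum_le_tsum K)
  simp [Measure.dirac_apply' _ hs, hK n hn]

theorem sum_smul_dirac_apply_univ {ι α : Type*} [MeasurableSpace α] (a : ι → α) {v : ι → ℝ}
    (hv : ∀ n, 0 ≤ v n) (hsum : Summable v) :
    Measure.sum (fun n => ENNReal.ofReal (v n) • Measure.dirac (a n)) univ =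
      ENNReal.ofReal (∑' n, v n) := by
  simp [Measure.sum_apply _ MeasurableSet.univ, ENNReal.ofReal_tsum_of_nonneg hv hsum]

theorem BallCluster.norm_ne_of_forall_measure_closedBall_lt {E : Type*} [NormedAddCommGroup E]
    {ζ : ℕ → E} {w : ℕ → ℝ} (hw : ∀ n, 0 < w n)
    (K : BallCluster ζ w) {τ : ℝ}
    (hτ : ∀ r > 0, Measure.sum (fun n => ENNReal.ofReal (2 * w n) • Measure.dirac ‖ζ n‖)
      (closedBall τ r) < ENNReal.ofReal r) :
    ∀ p ∈ K.ball, ‖p‖ ≠ τ := by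
  intro p hp hpτ
  have hρ : 0 < K.radius := dist_nonneg.trans_lt hp
  have hK : ∀ m ∈ K.members, ‖ζ m‖ ∈ closedBall τ (2 * K.radius) := by
    intro m hm
    have hm' : dist (ζ m) K.center < K.radius := K.mem_ball_of_mem hw hm
    have hp' : dist p K.center < K.radius := hp
    rw [mem_closedBall, Real.dist_eq, ← hpτ]
    calc |‖ζ m‖ - ‖p‖| ≤ dist (ζ m) p := by rw [dist_eq_norm]; exact abs_norm_sub_norm_le _ _
      _ ≤ dist (ζ m) K.center + dist p K.center := dist_triangle_right _ _ _
      _ ≤ 2 * K.radius := by linarith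
  have hmass := ofReal_sum_le_sum_smul_dirac_apply (a := fun n => ‖ζ n‖)
    (fun n => (mul_pos two_pos (hw n)).le) measurableSet_closedBall hK
  have hsum : ENNReal.ofReal (2 * K.radius) ≤ ENNReal.ofReal (∑ n ∈ K.members, 2 * w n) := by
    rw [← Finset.mul_sum]
    exact ENNReal.ofReal_le_ofReal (by linarith [K.radius_le])
  exact (hsum.trans hmass).not_gt (hτ _ (by positivity))

section Covering

variable {E : Type*} [NormedAddCommGroup E] [NormedSpace ℝ E] {ζ : ℕ → E} {w : ℕ → ℝ}

theorem exists_pairwise_disjoint_balls_of_forall_norm_ne (hw : ∀ n, 0 < w n)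
    (hfin : ∀ R, {n | ‖ζ n‖ ≤ R}.Finite) {t : ℕ → ℝ} (ht : Monotone t) (ht0 : t 0 ≤ 0)
    (htop : ∀ R, ∃ k, R < t k) (hcut : ∀ k (K : BallCluster ζ w), ∀ p ∈ K.ball, ‖p‖ ≠ t k) :
    ∃ (z : ℕ → E) (r : ℕ → ℝ), Pairwise (Disjoint on fun j => ball (z j) (r j)) ∧
      ∀ n, ball (ζ n) (w n) ⊆ ⋃ j, ball (z j) (r j) := by
  classical
  have hreg : ∀ n, ∃ k, ‖ζ n‖ ∈ Ioo (t k) (t (k + 1)) := by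
    intro n
    obtain ⟨k, hk⟩ := exists_mem_Ico_of_forall_exists_lt htop (ht0.trans (norm_nonneg (ζ n)))
    have hne := hcut k (.single n) (ζ n) (mem_ball_self (hw n))
    exact ⟨k, hk.1.lt_of_ne' hne, hk.2⟩
  have hF : ∀ k, {n | ‖ζ n‖ ∈ Ioo (t k) (t (k + 1))}.Finite := fun k =>
    (hfin (t (k + 1))).subset fun n hn => hn.2.le
  choose T hT hTF using fun k => BallCluster.exists_pairwiseDisjoint_ball (x := ζ) (r := w)
    (hF k).toFinset
  have hmem : ∀ k n, ‖ζ n‖ ∈ Ioo (t k) (t (k + 1)) ↔ ∃ K ∈ T k, n ∈ K.members := fun k n => by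
    rw [← Finset.mem_biUnion, hTF k, Set.Finite.mem_toFinset, mem_ofPred_eq]
  have hconf : ∀ k, ∀ K ∈ T k, MapsTo norm K.ball (Ioo (t k) (t (k + 1))) := fun k K hK =>
    K.mapsTo_norm_Ioo hw (hcut k K) (hcut (k + 1) K) fun n hn => (hmem k n).mpr ⟨K, hK, hn⟩
  have hsep : ∀ k l, k < l → ∀ K ∈ T k, ∀ L ∈ T l, Disjoint K.ball L.ball := by
    intro k l hkl K hK L hL
    refine disjoint_left.mpr fun p hpK hpL => ?_
    exact lt_irrefl _ (((hconf k K hK hpK).2.trans_le (ht (Nat.succ_le_of_lt hkl))).trans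
      (hconf l L hL hpL).1)
  have hdisj : Pairwise (Disjoint on fun a : Σ k, T k => a.2.1.ball) := by
    rintro ⟨k, K, hK⟩ ⟨l, L, hL⟩ hne
    rcases lt_trichotomy k l with hkl | rfl | hlk
    · exact hsep k l hkl K hK L hL
    · exact hT k hK hL fun h => hne (by subst h; rfl)
    · exact (hsep l k hlk L hL K hK).symm
  obtain ⟨z, r, hzr, hU⟩ := exists_nat_pairwise_disjoint_ball_iUnion_eq
    (fun a : Σ k, T k => a.2.1.center) (fun a => a.2.1.radius) hdisj
  refine ⟨z, r, hzr, fun n => ?_⟩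
  obtain ⟨k, hk⟩ := hreg n
  obtain ⟨K, hK, hn⟩ := (hmem k n).mp hk
  rw [hU]
  exact (K.ball_subset n hn).trans (subset_iUnion_of_subset ⟨k, K, hK⟩ subset_rfl)

theorem exists_pairwise_disjoint_balls_of_tsum_lt (hw : ∀ n, 0 < w n) (hsum : Summable w)
    (hsmall : 16 * ∑' n, w n < 1) (hfin : ∀ R, {n | ‖ζ n‖ ≤ R}.Finite) :
    ∃ (z : ℕ → E) (r : ℕ → ℝ), Pairwise (Disjoint on fun j => ball (z j) (r j)) ∧
      ∀ n, ball (ζ n) (w n) ⊆ ⋃ j, ball (z j) (r j) := by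
  set μ := Measure.sum fun n => ENNReal.ofReal (2 * w n) • Measure.dirac ‖ζ n‖
  have hμ : 8 * μ univ < 1 := by
    rw [sum_smul_dirac_apply_univ _ (fun n => (mul_pos two_pos (hw n)).le) (hsum.mul_left 2),
      tsum_mul_left, ← ENNReal.ofReal_ofNat 8, ← ENNReal.ofReal_mul (by norm_num),
      ← ENNReal.ofReal_one, ENNReal.ofReal_lt_ofReal_iff one_pos]
    linarith
  choose t ht hgood using fun k : ℕ =>
    Real.exists_mem_Icc_forall_measure_closedBall_lt μ hμ (2 * k - 1)
  refine exists_pairwise_disjoint_balls_of_forall_norm_ne hw hfin ?_ ?_ ?_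
    fun k K => K.norm_ne_of_forall_measure_closedBall_lt hw (hgood k)
  · refine monotone_nat_of_le_succ fun k => ?_
    linarith [(ht k).2, (ht (k + 1)).1, (by push_cast; ring : ((k + 1 : ℕ) : ℝ) = k + 1)]
  · simpa using (ht 0).2
  · intro R
    refine ⟨⌈R⌉₊ + 1, ?_⟩
    have := (ht (⌈R⌉₊ + 1)).1
    push_cast at this
    linarith [Nat.le_ceil R, (Nat.cast_nonneg ⌈R⌉₊ : (0 : ℝ) ≤ _)]

end Covering

theorem le_norm_sub_of_mul_rpow_neg_le {E : Type*} [NormedAddCommGroup E] {s z : E} {ε q : ℝ}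
    (hε : 0 < ε) (hq : 0 ≤ q) (h : ε * (1 + ‖z‖ ^ 2) ^ (-q) ≤ ‖s - z‖) :
    min 1 (ε * 8 ^ (-q)) * (1 + ‖s‖ ^ 2) ^ (-q) ≤ ‖s - z‖ := by
  have hs : 0 < 1 + ‖s‖ ^ 2 := by positivity
  by_cases hz : ‖z‖ ≤ 2 * ‖s‖ + 1
  · have h8 : 1 + ‖z‖ ^ 2 ≤ 8 * (1 + ‖s‖ ^ 2) := by
      nlinarith [norm_nonneg s, norm_nonneg z, sq_nonneg (‖s‖ - 1)]
    calc min 1 (ε * 8 ^ (-q)) * (1 + ‖s‖ ^ 2) ^ (-q)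
        ≤ ε * (8 * (1 + ‖s‖ ^ 2)) ^ (-q) := by
          rw [Real.mul_rpow (by norm_num) hs.le, ← mul_assoc]
          gcongr
          exact min_le_right _ _
      _ ≤ ε * (1 + ‖z‖ ^ 2) ^ (-q) := mul_le_mul_of_nonneg_left
          (Real.rpow_le_rpow_of_nonpos (by positivity) h8 (neg_nonpos.mpr hq)) hε.le
      _ ≤ ‖s - z‖ := h
  · have h1 : 1 ≤ ‖s - z‖ := by
      linarith [norm_sub_norm_le z s, norm_sub_rev z s, norm_nonneg s]
    calc min 1 (ε * 8 ^ (-q)) * (1 + ‖s‖ ^ 2) ^ (-q) ≤ 1 * 1 :=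
          mul_le_mul (min_le_left _ _) (Real.rpow_le_one_of_one_le_of_nonpos (by nlinarith)
            (by linarith)) (by positivity) zero_le_one
      _ ≤ ‖s - z‖ := by linarith

/-- Given the counting bound `#{n : |ζ n| ≤ r} ≤ C(1+r²)` and `δ > 0`,
there exist `c > 0` and a countable collection of pairwise disjoint open discs covering
`{ζ n}` such that every `s` outside the union of the discs satisfies
`|s − ζ n| ≥ c·(1+|s|²)^{−(2+δ)/2}` for all `n`. -/
theorem stmt6 (ζ : ℕ → ℂ) (C : ℝ) (hC : 0 < C)
    (hcount : ∀ r : ℝ, 0 ≤ r → {n : ℕ | ‖ζ n‖ ≤ r}.Finite ∧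
      ({n : ℕ | ‖ζ n‖ ≤ r}.ncard : ℝ) ≤ C * (1 + r ^ 2))
    (δ : ℝ) (hδ : 0 < δ) :
    ∃ c : ℝ, 0 < c ∧ ∃ (z : ℕ → ℂ) (r : ℕ → ℝ),
      (Pairwise fun i j : ℕ =>
        Disjoint (Metric.ball (z i) (r i)) (Metric.ball (z j) (r j))) ∧
      Set.range ζ ⊆ ⋃ j : ℕ, Metric.ball (z j) (r j) ∧
      ∀ s : ℂ, s ∉ ⋃ j : ℕ, Metric.ball (z j) (r j) →
        ∀ n : ℕ, c * (1 + ‖s‖ ^ 2) ^ (-(2 + δ) / 2) ≤ ‖s - ζ n‖ := by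
  set q := (2 + δ) / 2
  have hq : 1 < q := by simp only [q]; linarith
  have hsum := summable_one_add_norm_sq_rpow_neg hC hq hcount
  set M := ∑' n, (1 + ‖ζ n‖ ^ 2) ^ (-q)
  have hM : 0 ≤ M := tsum_nonneg fun n => by positivity
  set ε := (32 * (M + 1))⁻¹
  have hε : 0 < ε := by positivity
  obtain ⟨z, r, hdisj, hcov⟩ := exists_pairwise_disjoint_balls_of_tsum_lt
    (w := fun n => ε * (1 + ‖ζ n‖ ^ 2) ^ (-q)) (fun n => by positivity) (hsum.mul_left ε)
    (by
      rw [tsum_mul_left, show 16 * (ε * M) = M / (2 * (M + 1)) by simp only [ε]; field_simp; ring,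
        div_lt_one (by positivity)]
      linarith)
    fun R => (hcount (max R 0) (le_max_right _ _)).1.subset fun n hn =>
      show ‖ζ n‖ ≤ max R 0 from le_max_of_le_left hn
  refine ⟨min 1 (ε * 8 ^ (-q)), by positivity, z, r, hdisj, ?_, fun s hs n => ?_⟩
  · rintro _ ⟨n, rfl⟩
    exact hcov n (mem_ball_self (by positivity))
  · rw [neg_div]
    refine le_norm_sub_of_mul_rpow_neg_le hε (by positivity) (not_lt.mp fun h => hs ?_)
    exact hcov n (by rwa [mem_ball, dist_eq_norm])
end

section
/- Let μ > 0, a₀, a₁ ∈ ℂ, and let h : (0,∞) → ℂ be measurable with |h(t) − a₀/t − a₁| ≤ C·t for t ∈ (0,1] and |h(t)| ≤ C·e^{−μt} for t ≥ 1 (for some C > 0). Fix z ∈ ℂ with Re(z) > −μ. Then the function G(w) = ∫₀^∞ t^{w−1} e^{−tz} h(t) dt is defined by an absolutely convergent integral for Re(w) > 1, and extends to a meromorphic function on {Re(w) > −1} whose only possible poles are simple: one at w = 1 with residue a₀ and one at w = 0 with residue a₁ − a₀·z. Consequently w ↦ G(w)/Γ(w) extends holomorphically to a neighborhood of w = 0.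 -/
open MeasureTheory Set Filter Topology Asymptotics

/-!
Cut off at `1`, the singular part `a₀ / t + (a₁ - a₀ z)` of `e^{-tz} h(t)` has the explicit Mellin
transform `a₀ / (w - 1) + (a₁ - a₀ z) / w`. What remains is `O(t)` at `0` (expand `e^{-tz}` to
second order) and decays like `e^{-(μ + Re z) t}` at infinity, so its Mellin transform is
holomorphic on `Re w > -1`. Finally `1 / Γ(w) = w / Γ(w + 1)` vanishes at `0` and absorbs the pole
there.
-/

lemma locallyIntegrableOn_of_norm_le {X E : Type*} [TopologicalSpace X] [MeasurableSpace X]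
    [OpensMeasurableSpace X] [LocallyCompactSpace X] [T2Space X] [NormedAddCommGroup E]
    {μ : Measure X} [IsLocallyFiniteMeasure μ] {f : X → E} {B : X → ℝ} {s : Set X}
    (hs : IsOpen s) (hf : AEStronglyMeasurable f μ) (hB : ContinuousOn B s)
    (hfB : ∀ x ∈ s, ‖f x‖ ≤ B x) : LocallyIntegrableOn f s μ :=
  (locallyIntegrableOn_iff hs.isLocallyClosed).2 fun _K hKs hK =>
    ((hB.mono hKs).integrableOn_compact hK).mono' hf.restrict
      (ae_restrict_of_forall_mem hK.measurableSet fun x hx => hfB x (hKs hx))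

noncomputable def mellinPrincipalPart (a₀ a₁ : ℂ) : ℝ → ℂ :=
  indicator (Ioc 0 1) fun t => a₀ / t + a₁

lemma hasMellin_mellinPrincipalPart (a₀ a₁ : ℂ) {s : ℂ} (hs : 1 < s.re) :
    HasMellin (mellinPrincipalPart a₀ a₁) s (a₀ / (s - 1) + a₁ / s) := by
  have h₀ := hasMellin_cpow_Ioc (-1) (s := s) (by simp; linarith)
  have h₁ := hasMellin_cpow_Ioc 0 (s := s) (by simp; linarith)
  have h₀' := hasMellin_const_smul h₀.1 a₀
  have h₁' := hasMellin_const_smul h₁.1 a₁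
  have hsum := hasMellin_add h₀'.1 h₁'.1
  rw [h₀'.2, h₁'.2, h₀.2, h₁.2] at hsum
  have hP : mellinPrincipalPart a₀ a₁ = fun t =>
      a₀ • indicator (Ioc 0 1) (fun t : ℝ => (t : ℂ) ^ (-1 : ℂ)) t
        + a₁ • indicator (Ioc 0 1) (fun t : ℝ => (t : ℂ) ^ (0 : ℂ)) t := by
    funext t
    by_cases ht : t ∈ Ioc 0 1 <;>
      simp [mellinPrincipalPart, ht, div_eq_mul_inv, Complex.cpow_neg_one]
  rw [hP, show a₀ / (s - 1) + a₁ / s = a₀ • (1 / (s + -1)) + a₁ • (1 / (s + 0)) by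
    simp [div_eq_mul_inv, sub_eq_add_neg]]
  exact hsum

lemma locallyIntegrableOn_mellinPrincipalPart (a₀ a₁ : ℂ) :
    LocallyIntegrableOn (mellinPrincipalPart a₀ a₁) (Ioi 0) := by
  refine (locallyIntegrableOn_iff isOpen_Ioi.isLocallyClosed).2 fun K hK hKc => ?_
  refine IntegrableOn.indicator ?_ measurableSet_Ioc
  refine ContinuousOn.integrableOn_compact hKc ?_
  exact (continuousOn_const.div Complex.continuous_ofReal.continuousOn
    fun t ht => Complex.ofReal_ne_zero.2 (hK ht).ne').add continuousOn_const

section MellinExpansion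

variable {f : ℝ → ℂ} {a₀ a₁ : ℂ}

lemma isBigO_atTop_sub_mellinPrincipalPart {g : ℝ → ℝ} (hf : f =O[atTop] g) :
    (f - mellinPrincipalPart a₀ a₁) =O[atTop] g := by
  refine hf.congr' ?_ EventuallyEq.rfl
  filter_upwards [eventually_gt_atTop 1] with t ht
  simp [mellinPrincipalPart, ht.not_ge]

lemma isBigO_nhdsGT_sub_mellinPrincipalPart
    (hf : (fun t => f t - a₀ / t - a₁) =O[𝓝[>] 0] fun t => t) :
    (f - mellinPrincipalPart a₀ a₁) =O[𝓝[>] 0] (· ^ (-(-1 : ℝ))) := by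
  simp only [neg_neg, Real.rpow_one]
  refine hf.congr' ?_ EventuallyEq.rfl
  filter_upwards [Ioc_mem_nhdsGT zero_lt_one] with t ht
  simp [mellinPrincipalPart, ht, sub_sub]

theorem exists_hasMellin_eq_principalPart_add {b : ℝ} (hb : 0 < b)
    (hfc : LocallyIntegrableOn f (Ioi 0)) (hf_top : f =O[atTop] fun t => Real.exp (-b * t))
    (hf_bot : (fun t => f t - a₀ / t - a₁) =O[𝓝[>] 0] fun t => t) :
    ∃ E : ℂ → ℂ, DifferentiableOn ℂ E {s | -1 < s.re} ∧
      ∀ s : ℂ, 1 < s.re → HasMellin f s (a₀ / (s - 1) + a₁ / s + E s) := by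
  have hRc := hfc.sub (locallyIntegrableOn_mellinPrincipalPart a₀ a₁)
  have hR_top := isBigO_atTop_sub_mellinPrincipalPart (a₀ := a₀) (a₁ := a₁) hf_top
  have hR_bot := isBigO_nhdsGT_sub_mellinPrincipalPart hf_bot
  refine ⟨mellin (f - mellinPrincipalPart a₀ a₁), fun s hs => ?_, fun s hs => ?_⟩
  · exact (mellin_differentiableAt_of_isBigO_rpow_exp hb hRc hR_top hR_bot
      hs).differentiableWithinAt
  · have hP := hasMellin_mellinPrincipalPart a₀ a₁ hs
    have hR := mellinConvergent_of_isBigO_rpow_exp hb hRc hR_top hR_bot (by linarith)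
    simpa [hP.2] using hasMellin_add hP.1 hR

end MellinExpansion

lemma isBigO_cexp_neg_mul_sub_sum (z : ℂ) (n : ℕ) :
    (fun t : ℝ => Complex.exp (-t * z) - ∑ i ∈ Finset.range n, (-t * z) ^ i / i.factorial)
      =O[𝓝 0] fun t => t ^ n := by
  have hz : Tendsto (fun t : ℝ => -(t : ℂ) * z) (𝓝 0) (𝓝 0) := by
    have : Continuous fun t : ℝ => -(t : ℂ) * z := by fun_prop
    simpa using this.tendsto 0
  refine ((Complex.exp_sub_sum_range_isBigO_pow n).comp_tendsto hz).trans ?_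
  refine IsBigO.of_bound (‖z‖ ^ n) (Eventually.of_forall fun t => ?_)
  simp [mul_pow, mul_comm]

lemma isBigO_cexp_neg_mul_mul_sub {h : ℝ → ℂ} {a₀ a₁ : ℂ} (z : ℂ)
    (hh : (fun t => h t - a₀ / t - a₁) =O[𝓝[>] 0] fun t => t) :
    (fun t : ℝ => Complex.exp (-t * z) * h t - a₀ / t - (a₁ - a₀ * z)) =O[𝓝[>] 0] fun t => t := by
  have hu₁ : (fun t : ℝ => Complex.exp (-t * z) - 1) =O[𝓝[>] 0] fun t => t := by
    simpa using (isBigO_cexp_neg_mul_sub_sum z 1).mono nhdsWithin_le_nhds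
  have hu₂ : (fun t : ℝ => Complex.exp (-t * z) - 1 + t * z) =O[𝓝[>] 0] fun t => t ^ 2 := by
    simpa [Finset.sum_range_succ, sub_add, ← sub_eq_add_neg] using
      (isBigO_cexp_neg_mul_sub_sum z 2).mono nhdsWithin_le_nhds
  have hu : (fun t : ℝ => Complex.exp (-t * z)) =O[𝓝[>] 0] fun _ => (1 : ℝ) := by
    have : Continuous fun t : ℝ => Complex.exp (-t * z) := by fun_prop
    exact Tendsto.isBigO_one ℝ ((this.tendsto 0).mono_left nhdsWithin_le_nhds)
  have hinv : (fun t : ℝ => (t : ℂ)⁻¹) =O[𝓝[>] 0] fun t => t⁻¹ :=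
    IsBigO.of_bound' (Eventually.of_forall fun t => by simp)
  have h₁ : (fun t : ℝ => Complex.exp (-t * z) * (h t - a₀ / t - a₁)) =O[𝓝[>] 0] fun t => t := by
    simpa only [one_mul] using hu.mul hh
  have h₂ : (fun t : ℝ => (t : ℂ)⁻¹ * (Complex.exp (-t * z) - 1 + t * z)) =O[𝓝[>] 0]
      fun t => t := by
    refine (hinv.mul hu₂).congr' EventuallyEq.rfl ?_
    filter_upwards [self_mem_nhdsWithin] with t (ht : 0 < t)
    field_simp
  refine ((h₁.add (h₂.const_mul_left a₀)).add (hu₁.const_mul_left a₁)).congr' ?_ EventuallyEq.rfl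
  filter_upwards [self_mem_nhdsWithin] with t (ht : 0 < t)
  have : (t : ℂ) ≠ 0 := by exact_mod_cast ht.ne'
  field_simp
  ring

lemma isBigO_atTop_cexp_neg_mul_mul {h : ℝ → ℂ} {μ : ℝ} (z : ℂ)
    (hh : h =O[atTop] fun t => Real.exp (-μ * t)) :
    (fun t : ℝ => Complex.exp (-t * z) * h t) =O[atTop] fun t => Real.exp (-(μ + z.re) * t) := by
  have hexp : (fun t : ℝ => Complex.exp (-t * z)) =O[atTop] fun t => Real.exp (-z.re * t) :=
    IsBigO.of_bound' (Eventually.of_forall fun t => by simp [Complex.norm_exp, mul_comm])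
  simpa only [← Real.exp_add, neg_add, add_mul, add_comm] using hexp.mul hh

lemma norm_le_max_of_expansion {h : ℝ → ℂ} {a₀ a₁ : ℂ} {C μ : ℝ}
    (hsmall : ∀ t : ℝ, 0 < t → t ≤ 1 → ‖h t - a₀ / (t : ℂ) - a₁‖ ≤ C * t)
    (hlarge : ∀ t : ℝ, 1 ≤ t → ‖h t‖ ≤ C * Real.exp (-μ * t)) {t : ℝ} (ht : 0 < t) :
    ‖h t‖ ≤ max (C * t + ‖a₀‖ / t + ‖a₁‖) (C * Real.exp (-μ * t)) := by
  rcases le_total t 1 with ht₁ | ht₁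
  · refine le_max_of_le_left ?_
    calc ‖h t‖ = ‖(h t - a₀ / t - a₁) + a₀ / t + a₁‖ := by ring_nf
      _ ≤ ‖h t - a₀ / t - a₁‖ + ‖a₀ / (t : ℂ)‖ + ‖a₁‖ := norm_add₃_le
      _ ≤ C * t + ‖a₀‖ / t + ‖a₁‖ := by
        rw [norm_div, Complex.norm_real, Real.norm_of_nonneg ht.le]
        gcongr
        exact hsmall t ht ht₁
  · exact le_max_of_le_right (hlarge t ht₁)

lemma locallyIntegrableOn_Ioi_of_expansion {h : ℝ → ℂ} {a₀ a₁ : ℂ} {C μ : ℝ}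
    (hmeas : AEStronglyMeasurable h)
    (hsmall : ∀ t : ℝ, 0 < t → t ≤ 1 → ‖h t - a₀ / (t : ℂ) - a₁‖ ≤ C * t)
    (hlarge : ∀ t : ℝ, 1 ≤ t → ‖h t‖ ≤ C * Real.exp (-μ * t)) :
    LocallyIntegrableOn h (Ioi 0) :=
  locallyIntegrableOn_of_norm_le isOpen_Ioi hmeas
    (by fun_prop (disch := exact fun t (ht : 0 < t) => ht.ne'))
    fun _t ht => norm_le_max_of_expansion hsmall hlarge ht

lemma exists_analyticAt_eq_div_Gamma {R : ℂ → ℂ} (hR : AnalyticAt ℂ R 0) (c : ℂ) :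
    ∃ F : ℂ → ℂ, AnalyticAt ℂ F 0 ∧ ∀ w ≠ 0, F w = (c / w + R w) / Complex.Gamma w := by
  refine ⟨fun w => (c + w * R w) * (Complex.Gamma (w + 1))⁻¹,
    (analyticAt_const.add (analyticAt_id.mul hR)).mul
      ((Complex.differentiable_one_div_Gamma.comp (differentiable_id.add_const 1)).analyticAt 0),
    fun w hw => ?_⟩
  dsimp only
  rw [Complex.Gamma_add_one w hw]
  field_simp

theorem stmt12_general (μ : ℝ) (a₀ a₁ : ℂ) (h : ℝ → ℂ) (hmeas : Measurable h)
    (C : ℝ)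
    (hsmall : ∀ t : ℝ, 0 < t → t ≤ 1 → ‖h t - a₀ / (t : ℂ) - a₁‖ ≤ C * t)
    (hlarge : ∀ t : ℝ, 1 ≤ t → ‖h t‖ ≤ C * Real.exp (-μ * t))
    (z : ℂ) (hz : -μ < z.re) :
    (∀ w : ℂ, 1 < w.re →
      IntegrableOn (fun t : ℝ =>
        (t : ℂ) ^ (w - 1) * Complex.exp (-(t : ℂ) * z) * h t) (Ioi 0)) ∧
    ∃ E : ℂ → ℂ, DifferentiableOn ℂ E {w : ℂ | -1 < w.re} ∧
      (∀ w : ℂ, 1 < w.re →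
        ∫ t in Ioi (0 : ℝ), (t : ℂ) ^ (w - 1) * Complex.exp (-(t : ℂ) * z) * h t =
          a₀ / (w - 1) + (a₁ - a₀ * z) / w + E w) ∧
      ∃ F : ℂ → ℂ, AnalyticAt ℂ F 0 ∧
        ∀ w : ℂ, -1 < w.re → w ≠ 0 → w ≠ 1 →
          F w = (a₀ / (w - 1) + (a₁ - a₀ * z) / w + E w) / Complex.Gamma w := by
  set φ : ℝ → ℂ := fun t => Complex.exp (-t * z) * h t
  have hb : 0 < μ + z.re := by linarith
  have hφ_loc : LocallyIntegrableOn φ (Ioi 0) :=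
    (locallyIntegrableOn_Ioi_of_expansion hmeas.aestronglyMeasurable hsmall hlarge).continuousOn_mul
      (by fun_prop) isOpen_Ioi.isLocallyClosed
  have hφ_top : φ =O[atTop] fun t => Real.exp (-(μ + z.re) * t) := by
    refine isBigO_atTop_cexp_neg_mul_mul z (IsBigO.of_bound C ?_)
    filter_upwards [eventually_ge_atTop 1] with t ht
    simpa [Real.norm_of_nonneg (Real.exp_pos _).le] using hlarge t ht
  have hφ_bot : (fun t => φ t - a₀ / t - (a₁ - a₀ * z)) =O[𝓝[>] 0] fun t => t := by
    refine isBigO_cexp_neg_mul_mul_sub z (IsBigO.of_bound C ?_)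
    filter_upwards [Ioc_mem_nhdsGT zero_lt_one] with t ht
    simpa [abs_of_pos ht.1] using hsmall t ht.1 ht.2
  obtain ⟨E, hE, hE_mellin⟩ := exists_hasMellin_eq_principalPart_add hb hφ_loc hφ_top hφ_bot
  have hR : AnalyticAt ℂ (fun w => a₀ / (w - 1) + E w) 0 := by
    refine ((analyticAt_const.div (analyticAt_id.sub analyticAt_const) (by norm_num))).add ?_
    exact hE.analyticAt ((isOpen_lt continuous_const Complex.continuous_re).mem_nhds (by simp))
  obtain ⟨F, hF, hF_eq⟩ := exists_analyticAt_eq_div_Gamma hR (a₁ - a₀ * z)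
  refine ⟨fun w hw => ?_, E, hE, fun w hw => ?_, F, hF, fun w _ hw₀ _ => ?_⟩
  · simpa only [MellinConvergent, smul_eq_mul, mul_assoc] using (hE_mellin w hw).1
  · refine Eq.trans ?_ (hE_mellin w hw).2
    simp only [mellin, smul_eq_mul, mul_assoc, φ]
  · rw [hF_eq w hw₀]
    ring

/-- Let `μ > 0`, `a₀, a₁ ∈ ℂ`, and let `h` be measurable with
`|h(t) − a₀/t − a₁| ≤ C t` on `(0,1]` and `|h(t)| ≤ C e^{−μt}` for `t ≥ 1`.  Fix `z`
with `Re z > −μ`.  Then `G(w) = ∫₀^∞ t^{w−1} e^{−tz} h(t) dt` converges absolutely for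
`Re w > 1` and extends meromorphically to `{Re w > −1}` with only possible simple poles
at `w = 1` (residue `a₀`) and `w = 0` (residue `a₁ − a₀z`); consequently `G(w)/Γ(w)`
extends holomorphically to a neighborhood of `w = 0`. -/
theorem stmt12 (μ : ℝ) (hμ : 0 < μ) (a₀ a₁ : ℂ) (h : ℝ → ℂ) (hmeas : Measurable h)
    (C : ℝ) (hC : 0 < C)
    (hsmall : ∀ t : ℝ, 0 < t → t ≤ 1 → ‖h t - a₀ / (t : ℂ) - a₁‖ ≤ C * t)
    (hlarge : ∀ t : ℝ, 1 ≤ t → ‖h t‖ ≤ C * Real.exp (-μ * t))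
    (z : ℂ) (hz : -μ < z.re) :
    (∀ w : ℂ, 1 < w.re →
      IntegrableOn (fun t : ℝ =>
        (t : ℂ) ^ (w - 1) * Complex.exp (-(t : ℂ) * z) * h t) (Ioi 0)) ∧
    ∃ E : ℂ → ℂ, DifferentiableOn ℂ E {w : ℂ | -1 < w.re} ∧
      (∀ w : ℂ, 1 < w.re →
        ∫ t in Ioi (0 : ℝ), (t : ℂ) ^ (w - 1) * Complex.exp (-(t : ℂ) * z) * h t =
          a₀ / (w - 1) + (a₁ - a₀ * z) / w + E w) ∧
      ∃ F : ℂ → ℂ, AnalyticAt ℂ F 0 ∧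
        ∀ w : ℂ, -1 < w.re → w ≠ 0 → w ≠ 1 →
          F w = (a₀ / (w - 1) + (a₁ - a₀ * z) / w + E w) / Complex.Gamma w :=
  stmt12_general μ a₀ a₁ h hmeas C hsmall hlarge z hz
end
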